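/- arXiv:2408.06363 — 3 statements merged into one kernel-verified Lean document; each statement's English description precedes it below -/
import Mathlib

section
/- Let G be a compact topological group acting on a finite-dimensional real vector space V by a continuous linear representation. Then every G-invariant subspace L of V admits a G-invariant complement, i.e., a G-invariant subspace M with L ⊕ M = V (L ∩ M = {0} and L + M = V). -/
/-!
Let `π` be a continuous projection onto `L` and `μ` the Haar probability measure of `G`. The
average `P v = ∫ g, ρ g (π (ρ g⁻¹ v)) ∂μ` is again a projection onto `L`, and left invariance
of `μ` makes it commute with every `ρ h`; hence its kernel is a `G`-invariant complement of `L`.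
To have Bochner integrals, `V` is first identified with a Euclidean space.
-/

open MeasureTheory TopologicalSpace

namespace Representation

section Conj

variable {k G V W : Type*} [CommSemiring k] [Monoid G] [AddCommMonoid V] [Module k V]
  [AddCommMonoid W] [Module k W]

lemma mem_invtSubmodule_iff_forall_mem_of_mem {ρ : Representation k G V} {p : Submodule k V} :
    p ∈ ρ.invtSubmodule ↔ ∀ g, ∀ v ∈ p, ρ g v ∈ p := by
  simp only [mem_invtSubmodule, Module.End.mem_invtSubmodule_iff_forall_mem_of_mem]

def conj (ρ : Representation k G V) (e : V ≃ₗ[k] W) : Representation k G W :=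
  (e.conjAlgEquiv k).toMonoidHom.comp ρ

@[simp]
lemma conj_apply (ρ : Representation k G V) (e : V ≃ₗ[k] W) (g : G) (w : W) :
    ρ.conj e g w = e (ρ g (e.symm w)) :=
  rfl

lemma map_mem_invtSubmodule_conj_iff (ρ : Representation k G V) (e : V ≃ₗ[k] W)
    {p : Submodule k V} :
    p.map e.toLinearMap ∈ (ρ.conj e).invtSubmodule ↔ p ∈ ρ.invtSubmodule := by
  simp only [mem_invtSubmodule_iff_forall_mem_of_mem, Submodule.mem_map_equiv, conj_apply,
    LinearEquiv.symm_apply_apply]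
  exact forall_congr' fun g =>
    (e.symm.surjective.forall (p := fun v => v ∈ p → ρ g v ∈ p)).symm

lemma exists_isCompl_mem_invtSubmodule_of_conj (ρ : Representation k G V) (e : V ≃ₗ[k] W)
    {p : Submodule k V} (h : ∃ q ∈ (ρ.conj e).invtSubmodule, IsCompl (p.map e.toLinearMap) q) :
    ∃ q ∈ ρ.invtSubmodule, IsCompl p q := by
  obtain ⟨q, hq, hpq⟩ := h
  let F := Submodule.orderIsoMapComap e
  refine ⟨F.symm q, (ρ.map_mem_invtSubmodule_conj_iff e).1 ?_, F.isCompl_iff.2 ?_⟩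
  · change F (F.symm q) ∈ _
    rwa [F.apply_symm_apply]
  · rwa [F.apply_symm_apply]

end Conj

section Averaging

variable {G E : Type*} [Group G] [TopologicalSpace G] [IsTopologicalGroup G] [CompactSpace G]
  [MeasurableSpace G] [BorelSpace G] [NormedAddCommGroup E] [NormedSpace ℝ E]
  {ρ : Representation ℝ G E}

lemma integrable_conj_apply (hρ : Continuous fun p : G × E => ρ p.1 p.2) (μ : Measure G)
    [IsFiniteMeasure μ] (A : E →L[ℝ] E) (v : E) :
    Integrable (fun g => ρ g (A (ρ g⁻¹ v))) μ := by
  have hcont : Continuous fun g : G => ρ g (A (ρ g⁻¹ v)) :=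
    hρ.comp (continuous_id.prodMk
      (A.continuous.comp (hρ.comp (continuous_inv.prodMk continuous_const))))
  exact hcont.integrable_of_hasCompactSupport (.of_compactSpace _)

noncomputable def averageConj [CompleteSpace E] (hρ : Continuous fun p : G × E => ρ p.1 p.2)
    (μ : Measure G) [IsFiniteMeasure μ] (A : E →L[ℝ] E) : E →ₗ[ℝ] E where
  toFun v := ∫ g, ρ g (A (ρ g⁻¹ v)) ∂μ
  map_add' v w := by
    simp only [map_add]
    exact integral_add (integrable_conj_apply hρ μ A v) (integrable_conj_apply hρ μ A w)
  map_smul' c v := by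
    simp only [map_smul]
    exact integral_smul c _

variable [CompleteSpace E] (hρ : Continuous fun p : G × E => ρ p.1 p.2) (μ : Measure G)
  (A : E →L[ℝ] E)

lemma averageConj_apply [IsFiniteMeasure μ] (v : E) :
    averageConj hρ μ A v = ∫ g, ρ g (A (ρ g⁻¹ v)) ∂μ :=
  rfl

lemma averageConj_rep_apply [IsFiniteMeasure μ] [μ.IsMulLeftInvariant] (h : G) (v : E) :
    averageConj hρ μ A (ρ h v) = ρ h (averageConj hρ μ A v) := by
  let T : E →L[ℝ] E := ⟨ρ h, hρ.comp (continuous_const.prodMk continuous_id)⟩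
  have hconj : ∀ g, ρ (h * g) (A (ρ (h * g)⁻¹ (ρ h v))) = T (ρ g (A (ρ g⁻¹ v))) := by
    intro g
    rw [mul_inv_rev, map_mul ρ g⁻¹, Module.End.mul_apply, ← Module.End.mul_apply (ρ h⁻¹),
      ← map_mul, inv_mul_cancel, map_one, Module.End.one_apply, map_mul, Module.End.mul_apply]
    rfl
  rw [averageConj_apply, averageConj_apply, ← integral_mul_left_eq_self _ h]
  simp only [hconj]
  exact T.integral_comp_comm (integrable_conj_apply hρ μ A v)

variable [IsProbabilityMeasure μ] {L : Submodule ℝ E}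

lemma averageConj_mem (hL : L ∈ ρ.invtSubmodule) (hLc : IsClosed (L : Set E))
    (hA : ∀ v, A v ∈ L) (v : E) : averageConj hρ μ A v ∈ L :=
  L.convex.integral_mem hLc
    (.of_forall fun g => mem_invtSubmodule_iff_forall_mem_of_mem.1 hL g _ (hA _))
    (integrable_conj_apply hρ μ A v)

lemma averageConj_eq_self (hL : L ∈ ρ.invtSubmodule) (hA : ∀ v ∈ L, A v = v) {v : E}
    (hv : v ∈ L) : averageConj hρ μ A v = v := by
  have hconj : ∀ g, ρ g (A (ρ g⁻¹ v)) = v := fun g => by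
    rw [hA _ (mem_invtSubmodule_iff_forall_mem_of_mem.1 hL g⁻¹ v hv), ← Module.End.mul_apply,
      ← map_mul, mul_inv_cancel, map_one, Module.End.one_apply]
  simp [averageConj_apply, hconj]

end Averaging

theorem exists_isCompl_mem_invtSubmodule_of_closedComplemented {G E : Type*} [Group G]
    [TopologicalSpace G] [IsTopologicalGroup G] [CompactSpace G] [NormedAddCommGroup E]
    [NormedSpace ℝ E] [CompleteSpace E] {ρ : Representation ℝ G E}
    (hρ : Continuous fun p : G × E => ρ p.1 p.2) {L : Submodule ℝ E}
    (hL : L ∈ ρ.invtSubmodule) (hLc : L.ClosedComplemented) :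
    ∃ M ∈ ρ.invtSubmodule, IsCompl L M := by
  borelize G
  have hL_closed := hLc.isClosed
  obtain ⟨π, hπ⟩ := hLc
  let μ := Measure.haarMeasure (⊤ : PositiveCompacts G)
  have : IsProbabilityMeasure μ := ⟨by
    rw [← PositiveCompacts.coe_top, Measure.haarMeasure_self]⟩
  let A : E →L[ℝ] E := L.subtypeL ∘L π
  have hP : ∀ v, averageConj hρ μ A v ∈ L :=
    averageConj_mem hρ μ A hL hL_closed fun v => (π v).2
  let P : E →ₗ[ℝ] L := (averageConj hρ μ A).codRestrict L hP
  refine ⟨LinearMap.ker P, ?_, LinearMap.isCompl_of_proj fun x => Subtype.ext ?_⟩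
  · rw [mem_invtSubmodule_iff_forall_mem_of_mem]
    intro g v hv
    simp only [P, LinearMap.ker_codRestrict, LinearMap.mem_ker] at hv ⊢
    rw [averageConj_rep_apply, hv, map_zero]
  · exact averageConj_eq_self hρ μ A hL (fun v hv => congrArg Subtype.val (hπ ⟨v, hv⟩)) x.2

end Representation

open Representation

/-- Let `G` be a compact topological group acting on a finite-dimensional
real vector space `V` by a continuous linear representation. Then every `G`-invariant
subspace `L` of `V` admits a `G`-invariant complement `M`, i.e., `L ⊓ M = ⊥` and
`L ⊔ M = ⊤`. -/
theorem invariant_complement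
    {G V : Type*} [Group G] [TopologicalSpace G] [IsTopologicalGroup G] [CompactSpace G]
    [AddCommGroup V] [Module ℝ V] [FiniteDimensional ℝ V]
    [TopologicalSpace V] [IsTopologicalAddGroup V] [ContinuousSMul ℝ V] [T2Space V]
    (ρ : Representation ℝ G V)
    (hcont : Continuous fun p : G × V => ρ p.1 p.2)
    (L : Submodule ℝ V) (hL : ∀ (g : G), ∀ v ∈ L, ρ g v ∈ L) :
    ∃ M : Submodule ℝ V,
      (∀ (g : G), ∀ v ∈ M, ρ g v ∈ M) ∧ L ⊓ M = ⊥ ∧ L ⊔ M = ⊤ := by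
  let e : V ≃L[ℝ] EuclideanSpace ℝ (Fin (Module.finrank ℝ V)) := toEuclidean
  have hcont_conj : Continuous fun p : G × _ => ρ.conj e.toLinearEquiv p.1 p.2 :=
    e.continuous.comp <| hcont.comp <|
      continuous_fst.prodMk <| e.symm.continuous.comp continuous_snd
  have hL_conj : L.map e.toLinearMap ∈ (ρ.conj e.toLinearEquiv).invtSubmodule :=
    (map_mem_invtSubmodule_conj_iff ρ e.toLinearEquiv).2
      (mem_invtSubmodule_iff_forall_mem_of_mem.2 hL)
  obtain ⟨M, hM, hLM⟩ := exists_isCompl_mem_invtSubmodule_of_conj ρ e.toLinearEquiv <|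
    exists_isCompl_mem_invtSubmodule_of_closedComplemented hcont_conj hL_conj
      (.of_finiteDimensional _)
  exact ⟨M, mem_invtSubmodule_iff_forall_mem_of_mem.1 hM, hLM.inf_eq_bot, hLM.sup_eq_top⟩
end

section
/- Let G be a compact topological group and let (V, ω) be a symplectic G-space. Let L be a G-invariant Lagrangian subspace of V and J a G-invariant isotropic subspace of V with L ∩ J = {0}. Then there exists a G-invariant Lagrangian subspace M of V with J ⊆ M, L ∩ M = {0}, and L + M = V. -/
/-- The symplectic orthogonal `W^ω = {v : V | ∀ w ∈ W, ω v w = 0}` of a subspace `W`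
with respect to a bilinear form `ω`. -/
def symplOrth {V : Type*} [AddCommGroup V] [Module ℝ V]
    (ω : V →ₗ[ℝ] V →ₗ[ℝ] ℝ) (W : Submodule ℝ V) : Submodule ℝ V where
  carrier := {v | ∀ w ∈ W, ω v w = 0}
  zero_mem' := by intro w hw; simp
  add_mem' := by intro a b ha hb w hw; simp [ha w hw, hb w hw]
  smul_mem' := by intro c a ha w hw; simp [ha w hw]

/-!
Averaging a Euclidean inner product over the Haar measure of `G` gives an invariant one, so every
invariant subspace has an invariant complement. Since `L + J^ω = (L ∩ J)^ω = V`, this produces an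
invariant complement `N` of `L` with `J ⊆ N ⊆ J^ω`. A complement `N` of a Lagrangian `L` can then be
tilted into a Lagrangian complement, `{l + n | l ∈ L, n ∈ N, 2l + n ∈ N^ω}`. This subspace is
determined by `L`, `N` and `ω` alone, hence is `G`-invariant, and it contains `N ∩ N^ω ⊇ J`.
-/

open Module MeasureTheory

section SymplecticOrthogonal

variable {V : Type*} [AddCommGroup V] [Module ℝ V] {ω : V →ₗ[ℝ] V →ₗ[ℝ] ℝ}

lemma mem_symplOrth {W : Submodule ℝ V} {v : V} : v ∈ symplOrth ω W ↔ ∀ w ∈ W, ω v w = 0 :=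
  Iff.rfl

lemma symplOrth_bot : symplOrth ω ⊥ = ⊤ := by
  ext v
  simp [mem_symplOrth]

lemma symplOrth_sup (A B : Submodule ℝ V) :
    symplOrth ω (A ⊔ B) = symplOrth ω A ⊓ symplOrth ω B := by
  ext v
  simp only [Submodule.mem_inf, mem_symplOrth, ← LinearMap.mem_ker (f := ω v), ← SetLike.le_def,
    sup_le_iff]

lemma symplOrth_top (hnd : ω.SeparatingLeft) : symplOrth ω ⊤ = ⊥ :=
  eq_bot_iff.mpr fun v hv => hnd v fun w => hv w trivial

lemma symplOrth_eq_orthogonal (hω : ω.IsAlt) (W : Submodule ℝ V) :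
    symplOrth ω W = LinearMap.BilinForm.orthogonal ω W := by
  ext v
  simp only [mem_symplOrth, LinearMap.BilinForm.mem_orthogonal_iff, hω.eq_iff]

lemma le_symplOrth_comm (hω : ω.IsAlt) {A B : Submodule ℝ V} :
    A ≤ symplOrth ω B ↔ B ≤ symplOrth ω A :=
  ⟨fun h _ hb _ ha => hω.eq_iff.mp (h ha _ hb), fun h _ ha _ hb => hω.eq_iff.mp (h hb _ ha)⟩

variable [FiniteDimensional ℝ V]

lemma finrank_symplOrth (hω : ω.IsAlt) (hnd : ω.SeparatingLeft) (W : Submodule ℝ V) :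
    finrank ℝ (symplOrth ω W) = finrank ℝ V - finrank ℝ W := by
  rw [symplOrth_eq_orthogonal hω]
  exact LinearMap.BilinForm.finrank_orthogonal
    (hω.isRefl.nondegenerate_iff_separatingLeft.mpr hnd) W

lemma symplOrth_symplOrth (hω : ω.IsAlt) (hnd : ω.SeparatingLeft) (W : Submodule ℝ V) :
    symplOrth ω (symplOrth ω W) = W := by
  rw [symplOrth_eq_orthogonal hω, symplOrth_eq_orthogonal hω]
  exact LinearMap.BilinForm.orthogonal_orthogonal
    (hω.isRefl.nondegenerate_iff_separatingLeft.mpr hnd) hω.isRefl W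

lemma symplOrth_inf (hω : ω.IsAlt) (hnd : ω.SeparatingLeft) (A B : Submodule ℝ V) :
    symplOrth ω (A ⊓ B) = symplOrth ω A ⊔ symplOrth ω B := by
  conv_lhs => rw [← symplOrth_symplOrth hω hnd A, ← symplOrth_symplOrth hω hnd B, ← symplOrth_sup]
  exact symplOrth_symplOrth hω hnd _

lemma symplOrth_eq_self_of_le_of_finrank_eq (hω : ω.IsAlt) (hnd : ω.SeparatingLeft)
    {L M : Submodule ℝ V} (hL : symplOrth ω L = L) (hM : M ≤ symplOrth ω M)
    (hLM : finrank ℝ M = finrank ℝ L) : symplOrth ω M = M := by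
  refine (Submodule.eq_of_le_of_finrank_eq hM ?_).symm
  rw [finrank_symplOrth hω hnd, hLM, ← finrank_symplOrth hω hnd, hL]

end SymplecticOrthogonal

section LagrangianComplement

variable {V : Type*} [AddCommGroup V] [Module ℝ V] {ω : V →ₗ[ℝ] V →ₗ[ℝ] ℝ}
  {L N : Submodule ℝ V}

/-- Along `V = L ⊕ N` this is `{l + n | 2 • l + n ∈ N^ω}`: the image of `N^ω` under the inverse
`u ↦ u - ½ P u` of `l + n ↦ 2 • l + n`, with `P` the projection onto `L`. -/
noncomputable def lagrangianComplement (ω : V →ₗ[ℝ] V →ₗ[ℝ] ℝ) (hLN : IsCompl L N) :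
    Submodule ℝ V :=
  (symplOrth ω N).map (LinearMap.id - (2⁻¹ : ℝ) • L.projection N hLN)

lemma lagrangianComplement_le_symplOrth (hω : ω.IsAlt) (hL : L ≤ symplOrth ω L)
    (hLN : IsCompl L N) :
    lagrangianComplement ω hLN ≤ symplOrth ω (lagrangianComplement ω hLN) := by
  rintro _ ⟨u, hu, rfl⟩ _ ⟨u', hu', rfl⟩
  set P := L.projection N hLN
  have hPP : ω (P u) (P u') = 0 :=
    hL (Submodule.projection_apply_mem hLN u) _ (Submodule.projection_apply_mem hLN u')
  have h₁ : ω u (u' - P u') = 0 := hu _ (Submodule.sub_projection_mem hLN u')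
  have h₂ : ω u' (u - P u) = 0 := hu' _ (Submodule.sub_projection_mem hLN u)
  have h₃ := hω.neg u u'
  have h₄ := hω.neg (P u) u'
  simp only [map_sub, LinearMap.sub_apply, map_smul, LinearMap.smul_apply, LinearMap.id_apply,
    smul_eq_mul] at h₁ h₂ ⊢
  linear_combination (h₁ - h₂ - h₃ + h₄) / 2 + hPP / 4

lemma disjoint_lagrangianComplement (hnd : ω.SeparatingLeft) (hL : symplOrth ω L = L)
    (hLN : IsCompl L N) : Disjoint L (lagrangianComplement ω hLN) := by
  rw [Submodule.disjoint_def]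
  rintro _ hv ⟨u, hu, rfl⟩
  have huL : u ∈ L := by
    have h := L.add_mem hv (L.smul_mem (2⁻¹ : ℝ) (Submodule.projection_apply_mem hLN u))
    simpa using h
  have hu0 : u ∈ symplOrth ω (L ⊔ N) := by
    rw [symplOrth_sup, hL]
    exact ⟨huL, hu⟩
  rw [hLN.sup_eq_top, symplOrth_top hnd, Submodule.mem_bot] at hu0
  simp [hu0]

lemma inf_symplOrth_le_lagrangianComplement (hLN : IsCompl L N) :
    N ⊓ symplOrth ω N ≤ lagrangianComplement ω hLN := by
  rintro u ⟨huN, hu⟩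
  refine ⟨u, hu, ?_⟩
  simp [Submodule.projection_apply_of_mem_right hLN huN]

lemma finrank_lagrangianComplement_eq_finrank_symplOrth (hLN : IsCompl L N) :
    finrank ℝ (lagrangianComplement ω hLN) = finrank ℝ (symplOrth ω N) := by
  set P := L.projection N hLN
  have hPP (x : V) : P (P x) = P x :=
    Submodule.projection_apply_of_mem_left hLN (Submodule.projection_apply_mem hLN x)
  have hinv : Function.LeftInverse ⇑(LinearMap.id + P : V →ₗ[ℝ] V)
      ⇑(LinearMap.id - (2⁻¹ : ℝ) • P : V →ₗ[ℝ] V) := by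
    intro u
    simp only [LinearMap.add_apply, LinearMap.sub_apply, LinearMap.smul_apply, LinearMap.id_apply,
      map_sub, map_smul, hPP]
    module
  exact (Submodule.equivMapOfInjective _ hinv.injective _).finrank_eq.symm

variable [FiniteDimensional ℝ V]

lemma finrank_lagrangianComplement (hω : ω.IsAlt) (hnd : ω.SeparatingLeft)
    (hLN : IsCompl L N) : finrank ℝ (lagrangianComplement ω hLN) = finrank ℝ L := by
  have := Submodule.finrank_add_eq_of_isCompl hLN
  rw [finrank_lagrangianComplement_eq_finrank_symplOrth, finrank_symplOrth hω hnd]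
  omega

lemma symplOrth_lagrangianComplement (hω : ω.IsAlt) (hnd : ω.SeparatingLeft)
    (hL : symplOrth ω L = L) (hLN : IsCompl L N) :
    symplOrth ω (lagrangianComplement ω hLN) = lagrangianComplement ω hLN :=
  symplOrth_eq_self_of_le_of_finrank_eq hω hnd hL
    (lagrangianComplement_le_symplOrth hω hL.ge hLN)
    (finrank_lagrangianComplement hω hnd hLN)

lemma isCompl_lagrangianComplement (hω : ω.IsAlt) (hnd : ω.SeparatingLeft)
    (hL : symplOrth ω L = L) (hLN : IsCompl L N) : IsCompl L (lagrangianComplement ω hLN) := by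
  refine (Submodule.isCompl_iff_disjoint _ _ ?_).mpr (disjoint_lagrangianComplement hnd hL hLN)
  have hdimL := finrank_symplOrth hω hnd L
  rw [hL] at hdimL
  rw [finrank_lagrangianComplement hω hnd hLN]
  omega

end LagrangianComplement

namespace Representation

variable {G V : Type*} [Group G] [AddCommGroup V] [Module ℝ V] (ρ : Representation ℝ G V)

lemma mem_invtSubmodule_iff_forall_mem {p : Submodule ℝ V} :
    p ∈ ρ.invtSubmodule ↔ ∀ g, ∀ v ∈ p, ρ g v ∈ p :=
  ρ.mem_invtSubmodule

variable {ρ}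

lemma orthogonal_mem_invtSubmodule {B : LinearMap.BilinForm ℝ V}
    (hB : ∀ g v w, B (ρ g v) (ρ g w) = B v w) {W : Submodule ℝ V} (hW : W ∈ ρ.invtSubmodule) :
    B.orthogonal W ∈ ρ.invtSubmodule := by
  rw [mem_invtSubmodule_iff_forall_mem] at hW ⊢
  intro g v hv
  rw [LinearMap.BilinForm.mem_orthogonal_iff] at hv ⊢
  intro w hw
  rw [← ρ.self_inv_apply g w, hB]
  exact hv _ (hW g⁻¹ w hw)

lemma symplOrth_mem_invtSubmodule {ω : V →ₗ[ℝ] V →ₗ[ℝ] ℝ}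
    (hω : ∀ g v w, ω (ρ g v) (ρ g w) = ω v w) {W : Submodule ℝ V} (hW : W ∈ ρ.invtSubmodule) :
    symplOrth ω W ∈ ρ.invtSubmodule :=
  orthogonal_mem_invtSubmodule (B := ω.flip) (fun g v w => hω g w v) hW

lemma lagrangianComplement_mem_invtSubmodule {ω : V →ₗ[ℝ] V →ₗ[ℝ] ℝ}
    (hω : ∀ g v w, ω (ρ g v) (ρ g w) = ω v w) {L N : Submodule ℝ V} (hLN : IsCompl L N)
    (hL : L ∈ ρ.invtSubmodule) (hN : N ∈ ρ.invtSubmodule) :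
    lagrangianComplement ω hLN ∈ ρ.invtSubmodule := by
  have hcomm (g : G) (u : V) : L.projection N hLN (ρ g u) = ρ g (L.projection N hLN u) := by
    have h : Commute (L.projection N hLN) (ρ g) :=
      LinearMap.IsIdempotentElem.commute_iff (Submodule.isIdempotentElem_projection hLN) |>.mpr
        ⟨by rw [Submodule.range_projection]; exact ρ.mem_invtSubmodule.mp hL g,
         by rw [Submodule.ker_projection]; exact ρ.mem_invtSubmodule.mp hN g⟩
    exact LinearMap.congr_fun h.eq u
  have hNω := (mem_invtSubmodule_iff_forall_mem ρ).mp (symplOrth_mem_invtSubmodule hω hN)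
  rw [mem_invtSubmodule_iff_forall_mem]
  rintro g _ ⟨u, hu, rfl⟩
  refine ⟨ρ g u, hNω g u hu, ?_⟩
  simp [hcomm]

section CompactGroup

variable [TopologicalSpace G] [IsTopologicalGroup G] [CompactSpace G] [FiniteDimensional ℝ V]
  [TopologicalSpace V] [IsTopologicalAddGroup V] [ContinuousSMul ℝ V] [T2Space V]

theorem exists_invariant_inner (hcont : Continuous fun p : G × V => ρ p.1 p.2) :
    ∃ B : LinearMap.BilinForm ℝ V, B.IsSymm ∧ (∀ v, v ≠ 0 → 0 < B v v) ∧
      ∀ g v w, B (ρ g v) (ρ g w) = B v w := by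
  borelize G
  let e : V ≃L[ℝ] _ := toEuclidean
  let b (g : G) : LinearMap.BilinForm ℝ V :=
    (innerₗ _).compl₁₂ (e.toLinearMap ∘ₗ ρ g⁻¹) (e.toLinearMap ∘ₗ ρ g⁻¹)
  have hb (g : G) (v w : V) : b g v w = inner ℝ (e (ρ g⁻¹ v)) (e (ρ g⁻¹ w)) := rfl
  have he (v : V) : Continuous fun g : G => e (ρ g⁻¹ v) :=
    e.continuous.comp (hcont.comp (continuous_inv.prodMk continuous_const))
  have hbc (v w : V) : Continuous fun g => b g v w := by
    simp only [hb]
    exact (he v).inner (he w)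
  have hint (v w : V) : Integrable (fun g => b g v w) Measure.haar :=
    (hbc v w).integrable_of_hasCompactSupport (.of_compactSpace _)
  refine ⟨LinearMap.mk₂ ℝ (fun v w => ∫ g, b g v w ∂Measure.haar) ?_ ?_ ?_ ?_, ⟨fun v w => ?_⟩,
    fun v hv => ?_, fun h v w => ?_⟩
  · intro v v' w
    simp only [map_add, LinearMap.add_apply]
    exact integral_add (hint v w) (hint v' w)
  · intro c v w
    simp only [map_smul, LinearMap.smul_apply, smul_eq_mul]
    exact integral_const_mul c _
  · intro v w w'
    simp only [map_add]
    exact integral_add (hint v w) (hint v w')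
  · intro c v w
    simp only [map_smul, smul_eq_mul]
    exact integral_const_mul c _
  · simp only [LinearMap.mk₂_apply, hb, real_inner_comm]
  · refine (hbc v v).integral_pos_of_hasCompactSupport_nonneg_nonzero (.of_compactSpace _)
      (fun g => real_inner_self_nonneg (x := e (ρ g⁻¹ v))) (x := 1) ?_
    simpa [hb] using hv
  · have h' (g : G) : b g (ρ h v) (ρ h w) = b (h⁻¹ * g) v w := by
      simp only [hb, mul_inv_rev, inv_inv, map_mul, Module.End.mul_apply]
    simp only [LinearMap.mk₂_apply, h']
    exact integral_mul_left_eq_self (fun g => b g v w) h⁻¹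

theorem exists_isCompl_mem_invtSubmodule (hcont : Continuous fun p : G × V => ρ p.1 p.2)
    {S : Submodule ℝ V} (hS : S ∈ ρ.invtSubmodule) : ∃ C ∈ ρ.invtSubmodule, IsCompl S C := by
  obtain ⟨B, hBsymm, hBpos, hBinv⟩ := exists_invariant_inner hcont
  refine ⟨B.orthogonal S, orthogonal_mem_invtSubmodule hBinv hS,
    (B.isCompl_orthogonal_iff_disjoint hBsymm.isRefl).mpr ?_⟩
  rw [Submodule.disjoint_def]
  intro v hv hvS
  by_contra hv0
  exact (hBpos v hv0).ne' (hvS v hv)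

theorem exists_isCompl_mem_invtSubmodule_between (hcont : Continuous fun p : G × V => ρ p.1 p.2)
    {L J W : Submodule ℝ V} (hL : L ∈ ρ.invtSubmodule) (hJ : J ∈ ρ.invtSubmodule)
    (hW : W ∈ ρ.invtSubmodule) (hJW : J ≤ W) (hLJ : Disjoint L J) (hLW : Codisjoint L W) :
    ∃ N ∈ ρ.invtSubmodule, J ≤ N ∧ N ≤ W ∧ IsCompl L N := by
  obtain ⟨C, hC, hSC⟩ := exists_isCompl_mem_invtSubmodule hcont
    (Sublattice.sup_mem (Sublattice.inf_mem hL hW) hJ)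
  have hNW : J ⊔ C ⊓ W ≤ W := sup_le hJW inf_le_right
  refine ⟨J ⊔ C ⊓ W, Sublattice.sup_mem hJ (Sublattice.inf_mem hC hW), le_sup_left, hNW, ?_, ?_⟩
  · have h : Disjoint (L ⊓ W) (J ⊔ C ⊓ W) :=
      (hLJ.mono_left inf_le_left).disjoint_sup_right_of_disjoint_sup_left
        (hSC.disjoint.mono_right inf_le_left)
    rw [disjoint_iff] at h ⊢
    rwa [inf_assoc, inf_eq_right.mpr hNW] at h
  · have hW' : W ≤ L ⊔ (J ⊔ C ⊓ W) :=
      calc W = (L ⊓ W ⊔ J ⊔ C) ⊓ W := by rw [hSC.sup_eq_top, top_inf_eq]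
        _ = L ⊓ W ⊔ J ⊔ C ⊓ W := sup_inf_assoc_of_le C (sup_le inf_le_right hJW)
        _ ≤ L ⊔ (J ⊔ C ⊓ W) := by rw [sup_assoc]; exact sup_le_sup_right inf_le_left _
    rw [codisjoint_iff_le_sup] at hLW ⊢
    exact hLW.trans (sup_le le_sup_left hW')

end CompactGroup

end Representation

/-- Let `G` be a compact topological group and `(V, ω)` a symplectic
`G`-space. Let `L` be a `G`-invariant Lagrangian subspace and `J` a `G`-invariant
isotropic subspace with `L ⊓ J = ⊥`. Then there is a `G`-invariant Lagrangian subspace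
`M` with `J ≤ M`, `L ⊓ M = ⊥` and `L ⊔ M = ⊤`. -/
theorem invariant_lagrangian_complement_containing_isotropic
    {G V : Type*} [Group G] [TopologicalSpace G] [IsTopologicalGroup G] [CompactSpace G]
    [AddCommGroup V] [Module ℝ V] [FiniteDimensional ℝ V]
    [TopologicalSpace V] [IsTopologicalAddGroup V] [ContinuousSMul ℝ V] [T2Space V]
    (ρ : Representation ℝ G V)
    (hcont : Continuous fun p : G × V => ρ p.1 p.2)
    (ω : V →ₗ[ℝ] V →ₗ[ℝ] ℝ)
    (halt : ∀ v : V, ω v v = 0)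
    (hnd : ∀ v : V, (∀ w : V, ω v w = 0) → v = 0)
    (hωinv : ∀ (g : G) (v w : V), ω (ρ g v) (ρ g w) = ω v w)
    (L J : Submodule ℝ V)
    (hLinv : ∀ (g : G), ∀ v ∈ L, ρ g v ∈ L)
    (hJinv : ∀ (g : G), ∀ v ∈ J, ρ g v ∈ J)
    (hLlag : symplOrth ω L = L)
    (hJiso : J ≤ symplOrth ω J)
    (hLJ : L ⊓ J = ⊥) :
    ∃ M : Submodule ℝ V,
      (∀ (g : G), ∀ v ∈ M, ρ g v ∈ M) ∧
      symplOrth ω M = M ∧ J ≤ M ∧ L ⊓ M = ⊥ ∧ L ⊔ M = ⊤ := by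
  rw [← ρ.mem_invtSubmodule_iff_forall_mem] at hLinv hJinv
  simp only [← ρ.mem_invtSubmodule_iff_forall_mem]
  have hW := ρ.symplOrth_mem_invtSubmodule hωinv hJinv
  have hLW : L ⊔ symplOrth ω J = ⊤ := by
    rw [← hLlag, ← symplOrth_inf halt hnd, hLJ, symplOrth_bot]
  obtain ⟨N, hN, hJN, hNW, hLN⟩ := Representation.exists_isCompl_mem_invtSubmodule_between hcont
    hLinv hJinv hW hJiso (disjoint_iff.mpr hLJ) (codisjoint_iff.mpr hLW)
  have hJ : J ≤ N ⊓ symplOrth ω N := le_inf hJN ((le_symplOrth_comm halt).mp hNW)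
  have hM := isCompl_lagrangianComplement halt hnd hLlag hLN
  exact ⟨lagrangianComplement ω hLN,
    ρ.lagrangianComplement_mem_invtSubmodule hωinv hLN hLinv hN,
    symplOrth_lagrangianComplement halt hnd hLlag hLN,
    hJ.trans (inf_symplOrth_le_lagrangianComplement hLN), hM.inf_eq_bot, hM.sup_eq_top⟩
end

section
/- Let G be a compact topological group, (V, ω) a symplectic G-space, and L ⊆ V a G-invariant Lagrangian subspace. Equip L × L* with the standard symplectic form ω₀((x,ξ),(y,η)) = η(x) − ξ(y) and the G-action g·(x,ξ) = (g·x, ξ ∘ g⁻¹). Then there exists a G-equivariant linear isomorphism φ : V → L × L* with ω₀(φ v, φ w) = ω(v, w) for all v, w ∈ V and φ(L) = L × {0}. -/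
/-- The standard symplectic form `ω₀((x,ξ),(y,η)) = η x − ξ y` on `L × L*`. -/
def stdForm (L : Type*) [AddCommGroup L] [Module ℝ L] :
    (L × Module.Dual ℝ L) →ₗ[ℝ] (L × Module.Dual ℝ L) →ₗ[ℝ] ℝ :=
  LinearMap.mk₂ ℝ (fun p q => q.2 p.1 - p.2 q.1)
    (fun p p' q => by simp; ring)
    (fun c p q => by simp; ring)
    (fun p q q' => by simp; ring)
    (fun c p q => by simp; ring)

/-- The action of `g : G` on an invariant subspace `L`, obtained by restricting `ρ g`. -/
def resRep {G V : Type*} [Group G] [AddCommGroup V] [Module ℝ V]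
    (ρ : Representation ℝ G V) (L : Submodule ℝ V)
    (hL : ∀ (g : G), ∀ v ∈ L, ρ g v ∈ L) (g : G) : L →ₗ[ℝ] L :=
  (ρ g).restrict (hL g)

open MeasureTheory

theorem Representation.exists_isProj_equivariant_of_normed {G E : Type*} [Group G]
    [TopologicalSpace G] [IsTopologicalGroup G] [CompactSpace G]
    [NormedAddCommGroup E] [NormedSpace ℝ E] [FiniteDimensional ℝ E]
    (ρ : Representation ℝ G E) (hρ : Continuous fun p : G × E => ρ p.1 p.2)
    {S : Submodule ℝ E} (hS : ∀ g, ∀ v ∈ S, ρ g v ∈ S) :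
    ∃ P : E →ₗ[ℝ] E, LinearMap.IsProj S P ∧ ∀ g v, P (ρ g v) = ρ g (P v) := by
  borelize G
  let μ : Measure G := Measure.haarMeasure ⟨⟨Set.univ, isCompact_univ⟩, by simp⟩
  have : IsProbabilityMeasure μ := ⟨Measure.haarMeasure_self⟩
  obtain ⟨S', hS'⟩ := S.exists_isCompl
  let q : E →L[ℝ] E := (S.projection S' hS').toContinuousLinearMap
  have hq : LinearMap.IsProj S q :=
    ⟨fun v => S.projection_apply_mem hS' v, fun v hv => S.projection_apply_left hS' ⟨v, hv⟩⟩
  let F : G → E →L[ℝ] E := fun g =>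
    (ρ g).toContinuousLinearMap ∘L q ∘L (ρ g⁻¹).toContinuousLinearMap
  have hF : Continuous F := continuous_clm_apply.2 fun v => by
    have hinv : Continuous fun g : G => ρ g⁻¹ v := hρ.comp (continuous_inv.prodMk continuous_const)
    exact hρ.comp (continuous_id.prodMk (q.continuous.comp hinv))
  have hFi : Integrable F μ := hF.integrable_of_hasCompactSupport (.of_compactSpace _)
  have hP_apply (v : E) : (∫ g, F g ∂μ) v = ∫ g, F g v ∂μ :=
    ContinuousLinearMap.integral_apply hFi v
  refine ⟨(∫ g, F g ∂μ : E →L[ℝ] E), ⟨fun v => ?_, fun v hv => ?_⟩, fun h v => ?_⟩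
  · rw [ContinuousLinearMap.coe_coe, hP_apply]
    exact S.convex.integral_mem S.closed_of_finiteDimensional
      (.of_forall fun g => hS g _ (hq.map_mem _)) (hFi.apply_continuousLinearMap v)
  · have hFv (g : G) : F g v = v := by
      simp [F, q, hq.map_id _ (hS g⁻¹ v hv)]
    simp [hP_apply, hFv]
  · have hFh (g : G) : F (h * g) (ρ h v) = ρ h (F g v) := by
      simp [F, map_mul, mul_inv_rev]
    simp only [ContinuousLinearMap.coe_coe, hP_apply]
    rw [← integral_mul_left_eq_self _ h]
    simp only [hFh]
    exact (ρ h).toContinuousLinearMap.integral_comp_comm (hFi.apply_continuousLinearMap v)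

theorem Representation.exists_isProj_equivariant {G V : Type*} [Group G]
    [TopologicalSpace G] [IsTopologicalGroup G] [CompactSpace G]
    [AddCommGroup V] [Module ℝ V] [FiniteDimensional ℝ V]
    [TopologicalSpace V] [IsTopologicalAddGroup V] [ContinuousSMul ℝ V] [T2Space V]
    (ρ : Representation ℝ G V) (hρ : Continuous fun p : G × V => ρ p.1 p.2)
    {S : Submodule ℝ V} (hS : ∀ g, ∀ v ∈ S, ρ g v ∈ S) :
    ∃ P : V →ₗ[ℝ] V, LinearMap.IsProj S P ∧ ∀ g v, P (ρ g v) = ρ g (P v) := by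
  -- Bochner integrals need a normed target, so transport the problem along `toEuclidean`.
  let e : V ≃L[ℝ] _ := toEuclidean
  let ρE : Representation ℝ G _ := (e.toLinearEquiv.conjAlgEquiv ℝ).toMonoidHom.comp ρ
  have hρE (g : G) (x) : ρE g x = e (ρ g (e.symm x)) := rfl
  have hρE_cont : Continuous fun p : G × _ => ρE p.1 p.2 :=
    e.continuous.comp (hρ.comp (continuous_fst.prodMk (e.symm.continuous.comp continuous_snd)))
  obtain ⟨P, hP, hPρ⟩ := ρE.exists_isProj_equivariant_of_normed hρE_cont
    (S := S.map e.toLinearMap)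
    (by rintro g - ⟨v, hv, rfl⟩; exact ⟨ρ g v, hS g v hv, by simp [hρE]⟩)
  refine ⟨e.symm.toLinearMap ∘ₗ P ∘ₗ e.toLinearMap, ⟨fun v => ?_, fun v hv => ?_⟩, fun g v => ?_⟩
  · obtain ⟨w, hw, hwe⟩ := hP.map_mem (e v)
    simpa [← hwe] using hw
  · have hPv : P (e v) = e v := hP.map_id _ ⟨v, hv, rfl⟩
    simp [hPv]
  · have hPv := hPρ g (e v)
    rw [hρE, hρE, e.symm_apply_apply] at hPv
    simp [hPv]

theorem LinearMap.SeparatingLeft.eq_of_forall_apply_eq {R M N : Type*} [CommRing R]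
    [AddCommGroup M] [Module R M] [AddCommGroup N] [Module R N] {B : M →ₗ[R] N →ₗ[R] R}
    (hB : B.SeparatingLeft) {a b : M} (h : ∀ u, B a u = B b u) : a = b :=
  sub_eq_zero.1 (hB _ fun u => by simp [h u])

section LagrangianProj

variable {V : Type*} [AddCommGroup V] [Module ℝ V] [FiniteDimensional ℝ V]
  {ω : V →ₗ[ℝ] V →ₗ[ℝ] ℝ}

noncomputable def lagrangianProj (hnd : ω.Nondegenerate) (P : V →ₗ[ℝ] V) : V →ₗ[ℝ] V :=
  (2⁻¹ : ℝ) • (LinearMap.id + P - LinearMap.BilinForm.leftAdjointOfNondegenerate ω hnd P)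

theorem lagrangianProj_apply_left (hnd : ω.Nondegenerate) (P : V →ₗ[ℝ] V) (v u : V) :
    ω (lagrangianProj hnd P v) u = 2⁻¹ * (ω v u + ω (P v) u - ω v (P u)) := by
  simp [lagrangianProj,
    LinearMap.BilinForm.isAdjointPairLeftAdjointOfNondegenerate ω hnd P v u]

theorem isProj_lagrangianProj (hnd : ω.Nondegenerate) {L : Submodule ℝ V}
    (hL : symplOrth ω L = L) {P : V →ₗ[ℝ] V} (hP : LinearMap.IsProj L P) :
    LinearMap.IsProj L (lagrangianProj hnd P) := by
  have hiso {x y : V} (hx : x ∈ L) (hy : y ∈ L) : ω x y = 0 :=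
    (hL.symm ▸ hx : x ∈ symplOrth ω L) y hy
  constructor
  · intro v
    rw [← hL]
    intro x hx
    rw [lagrangianProj_apply_left, hiso (hP.map_mem v) hx, hP.map_id x hx]
    ring
  · intro x hx
    refine hnd.1.eq_of_forall_apply_eq fun u => ?_
    rw [lagrangianProj_apply_left, hP.map_id x hx, hiso hx (hP.map_mem u)]
    ring

theorem isAdjointPair_lagrangianProj (hω : ω.IsAlt) (hnd : ω.Nondegenerate) (P : V →ₗ[ℝ] V) :
    LinearMap.IsAdjointPair ω ω (lagrangianProj hnd P)
      (LinearMap.id - lagrangianProj hnd P : V →ₗ[ℝ] V) := by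
  intro v u
  rw [LinearMap.sub_apply, map_sub, LinearMap.id_apply, ← hω.neg (lagrangianProj hnd P u),
    lagrangianProj_apply_left, lagrangianProj_apply_left, ← hω.neg v u, ← hω.neg v (P u),
    ← hω.neg (P v) u]
  ring

theorem lagrangianProj_equivariant {G : Type*} [Group G] (ρ : Representation ℝ G V)
    (hωρ : ∀ g v w, ω (ρ g v) (ρ g w) = ω v w) (hnd : ω.Nondegenerate) {P : V →ₗ[ℝ] V}
    (hPρ : ∀ g v, P (ρ g v) = ρ g (P v)) (g : G) (v : V) :
    lagrangianProj hnd P (ρ g v) = ρ g (lagrangianProj hnd P v) := by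
  have hmove (a b : V) : ω (ρ g a) b = ω a (ρ g⁻¹ b) := by
    rw [← hωρ g a, ρ.self_inv_apply]
  refine hnd.1.eq_of_forall_apply_eq fun u => ?_
  rw [hmove, lagrangianProj_apply_left, lagrangianProj_apply_left, hPρ, hPρ, hmove, hmove, hmove]

end LagrangianProj

section NormalForm

variable {V : Type*} [AddCommGroup V] [Module ℝ V] {ω : V →ₗ[ℝ] V →ₗ[ℝ] ℝ}
  {L : Submodule ℝ V} {π : V →ₗ[ℝ] V}

noncomputable def normalFormMap (ω : V →ₗ[ℝ] V →ₗ[ℝ] ℝ) (hπ : LinearMap.IsProj L π) :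
    V →ₗ[ℝ] L × Module.Dual ℝ L :=
  hπ.codRestrict.prod (-(L.subtype.dualMap ∘ₗ ω))

theorem coe_normalFormMap_fst (hπ : LinearMap.IsProj L π) (v : V) :
    ((normalFormMap ω hπ v).1 : V) = π v :=
  rfl

theorem normalFormMap_snd_apply (hπ : LinearMap.IsProj L π) (v : V) (x : L) :
    (normalFormMap ω hπ v).2 x = -ω v x :=
  rfl

theorem stdForm_normalFormMap (hω : ω.IsAlt) (hπ : LinearMap.IsProj L π)
    (hπω : LinearMap.IsAdjointPair ω ω π (LinearMap.id - π : V →ₗ[ℝ] V)) (v u : V) :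
    stdForm L (normalFormMap ω hπ v) (normalFormMap ω hπ u) = ω v u := by
  change (normalFormMap ω hπ u).2 (normalFormMap ω hπ v).1
    - (normalFormMap ω hπ v).2 (normalFormMap ω hπ u).1 = ω v u
  rw [normalFormMap_snd_apply, normalFormMap_snd_apply, coe_normalFormMap_fst,
    coe_normalFormMap_fst, hω.neg, hπω v u, LinearMap.sub_apply, map_sub, LinearMap.id_apply]
  ring

theorem normalFormMap_bijective [FiniteDimensional ℝ V] (hω : ω.IsAlt) (hnd : ω.Nondegenerate)
    (hL : L ≤ symplOrth ω L) (hπ : LinearMap.IsProj L π)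
    (hπω : LinearMap.IsAdjointPair ω ω π (LinearMap.id - π : V →ₗ[ℝ] V)) :
    Function.Bijective (normalFormMap ω hπ) := by
  refine ⟨fun v u h => hnd.1.eq_of_forall_apply_eq fun w => ?_, fun ⟨x, ξ⟩ => ?_⟩
  · rw [← stdForm_normalFormMap hω hπ hπω, ← stdForm_normalFormMap hω hπ hπω, h]
  · obtain ⟨v, hv⟩ : ∃ v, L.subtype.dualMap (ω v) = -ξ :=
      (LinearMap.dualMap_surjective_of_injective L.injective_subtype).comp
        (LinearMap.BilinForm.toDual ω hnd).surjective (-ξ)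
    refine ⟨v - π v + x, Prod.ext (Subtype.ext ?_) (LinearMap.ext fun y => ?_)⟩
    · simp [coe_normalFormMap_fst, hπ.map_id _ (hπ.map_mem v), hπ.map_id _ x.2]
    · have hvy : ω v y = -ξ y := LinearMap.congr_fun hv y
      simp [normalFormMap_snd_apply, hL (hπ.map_mem v) y y.2, hL x.2 y y.2, hvy]

theorem map_normalFormMap (hL : L ≤ symplOrth ω L) (hπ : LinearMap.IsProj L π) :
    L.map (normalFormMap ω hπ) = (⊤ : Submodule ℝ L).prod ⊥ := by
  have hsnd {x : V} (hx : x ∈ L) : (normalFormMap ω hπ x).2 = 0 :=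
    LinearMap.ext fun y => by simp [normalFormMap_snd_apply, hL hx y y.2]
  ext p
  simp only [Submodule.mem_map, Submodule.mem_prod, Submodule.mem_top, Submodule.mem_bot,
    true_and]
  constructor
  · rintro ⟨v, hv, rfl⟩
    exact hsnd hv
  · intro hp
    refine ⟨p.1, p.1.2, Prod.ext (Subtype.ext ?_) ((hsnd p.1.2).trans hp.symm)⟩
    simp [coe_normalFormMap_fst, hπ.map_id _ p.1.2]

theorem normalFormMap_equivariant {G : Type*} [Group G] (ρ : Representation ℝ G V)
    (hωρ : ∀ g v w, ω (ρ g v) (ρ g w) = ω v w) (hLρ : ∀ g, ∀ v ∈ L, ρ g v ∈ L)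
    (hπ : LinearMap.IsProj L π) (hπρ : ∀ g v, π (ρ g v) = ρ g (π v)) (g : G) (v : V) :
    normalFormMap ω hπ (ρ g v) = (resRep ρ L hLρ g (normalFormMap ω hπ v).1,
      (resRep ρ L hLρ g⁻¹).dualMap (normalFormMap ω hπ v).2) := by
  refine Prod.ext (Subtype.ext ?_) (LinearMap.ext fun y => ?_)
  · simp [coe_normalFormMap_fst, hπρ, resRep]
  · simp [normalFormMap_snd_apply, resRep, ← hωρ g v]

end NormalForm

/-- Let `G` be a compact topological group, `(V, ω)` a symplectic
`G`-space and `L` a `G`-invariant Lagrangian subspace. Then there is a `G`-equivariant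
symplectomorphism `φ : V → L × L*` (with the standard form and the action
`g·(x,ξ) = (g·x, ξ ∘ g⁻¹)` on `L × L*`) with `φ(L) = L × {0}`. -/
theorem equivariant_normal_form_lagrangian
    {G V : Type*} [Group G] [TopologicalSpace G] [IsTopologicalGroup G] [CompactSpace G]
    [AddCommGroup V] [Module ℝ V] [FiniteDimensional ℝ V]
    [TopologicalSpace V] [IsTopologicalAddGroup V] [ContinuousSMul ℝ V] [T2Space V]
    (ρ : Representation ℝ G V)
    (hcont : Continuous fun p : G × V => ρ p.1 p.2)
    (ω : V →ₗ[ℝ] V →ₗ[ℝ] ℝ)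
    (halt : ∀ v : V, ω v v = 0)
    (hnd : ∀ v : V, (∀ w : V, ω v w = 0) → v = 0)
    (hωinv : ∀ (g : G) (v w : V), ω (ρ g v) (ρ g w) = ω v w)
    (L : Submodule ℝ V)
    (hLinv : ∀ (g : G), ∀ v ∈ L, ρ g v ∈ L)
    (hLlag : symplOrth ω L = L) :
    ∃ φ : V ≃ₗ[ℝ] L × Module.Dual ℝ L,
      (∀ (g : G) (v : V), φ (ρ g v) =
        (resRep ρ L hLinv g (φ v).1, (resRep ρ L hLinv g⁻¹).dualMap (φ v).2)) ∧
      (∀ v w : V, stdForm L (φ v) (φ w) = ω v w) ∧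
      L.map (φ : V →ₗ[ℝ] L × Module.Dual ℝ L) =
        (⊤ : Submodule ℝ L).prod (⊥ : Submodule ℝ (Module.Dual ℝ L)) := by
  have hω : ω.IsAlt := halt
  have hnondeg : ω.Nondegenerate := hω.isRefl.nondegenerate_iff_separatingLeft.2 hnd
  obtain ⟨P, hP, hPρ⟩ := ρ.exists_isProj_equivariant hcont hLinv
  have hπ := isProj_lagrangianProj hnondeg hLlag hP
  have hπω := isAdjointPair_lagrangianProj hω hnondeg P
  exact ⟨.ofBijective _ (normalFormMap_bijective hω hnondeg hLlag.ge hπ hπω),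
    normalFormMap_equivariant ρ hωinv hLinv hπ (lagrangianProj_equivariant ρ hωinv hnondeg hPρ),
    stdForm_normalFormMap hω hπ hπω, map_normalFormMap hLlag.ge hπ⟩
end
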